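/- In a Coxeter group W with a finite standard parabolic subgroup W_f having longest element w₀, let W⁺ denote the set of elements that are maximal in their right coset W_f·y. If w ∈ W⁺ and v ≤ w in the Bruhat order, then the maximal element of the coset W_f·v also satisfies w₀·v' ≤ w, where v' is the minimal coset representative of W_f·v. -/

import Mathlib

open List Relation

namespace BruhatAux

structure Sgn (W : Type*) where
  w : W
  f : W → ZMod 2

variable {W : Type*} [Group W]

instance : Mul (Sgn W) := ⟨fun a b => ⟨a.w * b.w, fun t => a.f t + b.f (a.w⁻¹ * t * a.w)⟩⟩
instance : One (Sgn W) := ⟨⟨1, fun _ => 0⟩⟩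

@[simp] theorem Sgn.mul_w (a b : Sgn W) : (a * b).w = a.w * b.w := rfl
@[simp] theorem Sgn.mul_f (a b : Sgn W) (t : W) :
    (a * b).f t = a.f t + b.f (a.w⁻¹ * t * a.w) := rfl
@[simp] theorem Sgn.one_w : (1 : Sgn W).w = 1 := rfl
@[simp] theorem Sgn.one_f (t : W) : (1 : Sgn W).f t = 0 := rfl

instance : Monoid (Sgn W) where
  mul_assoc a b c := by
    show Sgn.mk _ _ = Sgn.mk _ _
    congr 1
    · exact mul_assoc _ _ _
    · funext t
      show a.f t + b.f _ + c.f _ = a.f t + (b.f _ + c.f _)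
      simp [mul_assoc, add_assoc, mul_inv_rev]
  one_mul a := by
    show Sgn.mk _ _ = a
    cases a with
    | mk w f => congr 1 <;> simp
  mul_one a := by
    show Sgn.mk _ _ = a
    cases a with
    | mk w f => congr 1 <;> simp

theorem sgn_pow_w (g : Sgn W) (n : ℕ) : (g ^ n).w = g.w ^ n := by
  induction n with
  | zero => simp
  | succ n ih => rw [pow_succ, pow_succ, Sgn.mul_w, ih]

theorem sgn_pow_f (g : Sgn W) (n : ℕ) (t : W) :
    (g ^ n).f t = ∑ k ∈ Finset.range n, g.f ((g.w ^ k)⁻¹ * t * g.w ^ k) := by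
  induction n with
  | zero => simp
  | succ n ih =>
      rw [pow_succ, Sgn.mul_f, ih, Finset.sum_range_succ, sgn_pow_w]

variable {B : Type*} {M : CoxeterMatrix B} (cs : CoxeterSystem M W)

open Classical in
/-- The image of the generators under the sign representation. -/
noncomputable def sgnGen (i : B) : Sgn W := ⟨cs.simple i, fun t => if t = cs.simple i then 1 else 0⟩


private theorem conj_eq_iff {W : Type*} [Group W] (a t x : W) :
    a⁻¹ * t * a = x ↔ t = a * x * a⁻¹ := by
  constructor
  · intro h; rw [← h]; group
  · intro h; rw [h]; group

theorem sgnGen_liftable : M.IsLiftable (sgnGen cs) := by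
  classical
  intro i i'
  set si := cs.simple i with hsi
  set si' := cs.simple i' with hsi'
  set r := si * si' with hr
  set m := M i i' with hm
  have hrm : r ^ m = 1 := cs.simple_mul_simple_pow i i'
  have hsq : si * si = 1 := cs.simple_mul_simple_self i
  have hsrs : si * r = r⁻¹ * si := by
    have h1 : si * r = si' := by rw [hr, ← mul_assoc, hsq, one_mul]
    have h2 : r⁻¹ * si = si' := by
      rw [hr, mul_inv_rev, cs.inv_simple, cs.inv_simple, mul_assoc, hsq, mul_one]
    rw [h1, h2]
  have hcomm : ∀ k : ℕ, si * r ^ k = (r ^ k)⁻¹ * si := by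
    intro k
    induction k with
    | zero => simp
    | succ k ih =>
        rw [pow_succ', ← mul_assoc, hsrs, mul_assoc, ih]
        group
  have hcomm2 : ∀ k : ℕ, si * (r ^ k)⁻¹ = r ^ k * si := by
    intro k
    have h := hcomm k
    have : r ^ k * (si * r ^ k) * (r ^ k)⁻¹ = r ^ k * ((r ^ k)⁻¹ * si) * (r ^ k)⁻¹ := by rw [h]
    calc si * (r ^ k)⁻¹ = r ^ k * ((r ^ k)⁻¹ * si) * (r ^ k)⁻¹ := by group
      _ = r ^ k * si := by rw [← this]; group
  -- the two families of dihedral reflections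
  have key1 : ∀ k : ℕ, r ^ k * si * (r ^ k)⁻¹ = r ^ (2 * k) * si := by
    intro k
    rw [mul_assoc, hcomm2, two_mul, pow_add, mul_assoc]
  have key2 : ∀ k : ℕ, r ^ k * (r * si) * (r ^ k)⁻¹ = r ^ (2 * k + 1) * si := by
    intro k
    calc r ^ k * (r * si) * (r ^ k)⁻¹ = r ^ (k + 1) * (si * (r ^ k)⁻¹) := by
          rw [pow_succ']; group
      _ = r ^ (k + 1) * (r ^ k * si) := by rw [hcomm2]
      _ = r ^ (2 * k + 1) * si := by rw [← mul_assoc, ← pow_add]; ring_nf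
  set g := sgnGen cs i * sgnGen cs i' with hg
  have hgw : g.w = r := rfl
  have hgf : ∀ x : W, g.f x = (if x = si then 1 else 0) + (if x = r * si then 1 else 0) := by
    intro x
    show (if x = si then (1 : ZMod 2) else 0) + (if si⁻¹ * x * si = si' then 1 else 0) = _
    have h1 : si⁻¹ * x * si = si' ↔ x = r * si := by
      rw [conj_eq_iff]
      have h2 : si * si' * si⁻¹ = r * si := by rw [hr, cs.inv_simple]
      rw [h2]
    simp only [h1]
  show g ^ m = 1
  have hw : (g ^ m).w = 1 := by rw [sgn_pow_w, hgw, hrm]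
  have hf : ∀ t, (g ^ m).f t = 0 := by
    intro t
    rw [sgn_pow_f, hgw]
    set F : ℕ → ZMod 2 := fun a => if t = r ^ a * si then 1 else 0 with hF
    have step : ∀ k ∈ Finset.range m,
        g.f ((r ^ k)⁻¹ * t * r ^ k) = F (2 * k) + F (2 * k + 1) := by
      intro k _
      rw [hgf]
      simp only [hF]
      rw [conj_eq_iff (r ^ k) t si, key1, conj_eq_iff (r ^ k) t (r * si), key2]
    rw [Finset.sum_congr rfl step]
    have pairsum : ∀ n : ℕ, ∑ k ∈ Finset.range n, (F (2 * k) + F (2 * k + 1)) =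
        ∑ a ∈ Finset.range (2 * n), F a := by
      intro n
      induction n with
      | zero => simp
      | succ n ih =>
          rw [Finset.sum_range_succ, ih,
            show 2 * (n + 1) = (2 * n + 1) + 1 by ring,
            Finset.sum_range_succ, Finset.sum_range_succ, add_assoc]
    rw [pairsum, two_mul, Finset.sum_range_add]
    have hFm : ∀ a, F (m + a) = F a := by
      intro a
      simp only [hF, pow_add, hrm, one_mul]
    simp only [hFm]
    have : ∀ x : ZMod 2, x + x = 0 := by decide
    exact this _
  suffices h : ∀ x : Sgn W, x.w = 1 → (∀ t, x.f t = 0) → x = 1 by exact h _ hw hf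
  intro x h1 h2
  cases x with
  | mk a b =>
      show Sgn.mk a b = Sgn.mk 1 (fun _ => 0)
      exact congrArg₂ Sgn.mk h1 (funext h2)

/-- Projection homomorphism. -/
def SgnProj : Sgn W →* W where
  toFun := Sgn.w
  map_one' := rfl
  map_mul' := fun _ _ => rfl

/-- The sign representation of the Coxeter group. -/
noncomputable def Phi : W →* Sgn W := cs.lift ⟨sgnGen cs, sgnGen_liftable cs⟩

theorem Phi_simple (i : B) : Phi cs (cs.simple i) = sgnGen cs i :=
  cs.lift_apply_simple (sgnGen_liftable cs) i

theorem Phi_w (w : W) : (Phi cs w).w = w := by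
  have h : (SgnProj).comp (Phi cs) = MonoidHom.id W := by
    apply cs.ext_simple
    intro i
    rw [MonoidHom.comp_apply, Phi_simple, MonoidHom.id_apply]
    rfl
  exact DFunLike.congr_fun h w

/-- The reflection cocycle. -/
noncomputable def eta (w t : W) : ZMod 2 := (Phi cs w).f t

open Classical in
theorem eta_simple (i : B) (t : W) :
    eta cs (cs.simple i) t = if t = cs.simple i then 1 else 0 := by
  unfold eta
  rw [Phi_simple]
  rfl

theorem eta_one (t : W) : eta cs 1 t = 0 := by
  unfold eta
  rw [map_one]
  rfl

theorem eta_mul (u v t : W) : eta cs (u * v) t = eta cs u t + eta cs v (u⁻¹ * t * u) := by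
  unfold eta
  rw [map_mul, Sgn.mul_f, Phi_w]

theorem eta_self {t : W} (ht : cs.IsReflection t) : eta cs t t = 1 := by
  classical
  obtain ⟨x, i, rfl⟩ := ht
  set si := cs.simple i with hsi
  set t := x * si * x⁻¹ with hT
  have h1 : eta cs t t = eta cs x t + eta cs (si * x⁻¹) (x⁻¹ * t * x) := by
    have hsplit : t = x * (si * x⁻¹) := by rw [hT]; group
    calc eta cs t t = eta cs (x * (si * x⁻¹)) t := by rw [← hsplit]
      _ = eta cs x t + eta cs (si * x⁻¹) (x⁻¹ * t * x) := by rw [eta_mul]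
  have h2 : x⁻¹ * t * x = si := by rw [hT]; group
  have h3 : eta cs (si * x⁻¹) si = 1 + eta cs x⁻¹ si := by
    rw [eta_mul]
    congr 1
    · rw [eta_simple, if_pos rfl]
    · congr 1
      group
  have h4 : eta cs x⁻¹ si + eta cs x t = 0 := by
    have h5 : eta cs (x⁻¹ * x) si = eta cs x⁻¹ si + eta cs x (x * si * x⁻¹) := by
      rw [eta_mul]
      congr 2
      group
    rw [inv_mul_cancel, eta_one, ← hT] at h5
    exact h5.symm
  rw [h1, h2, h3]
  have : ∀ a b : ZMod 2, b + a = 0 → a + (1 + b) = 1 := by decide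
  exact this _ _ h4

theorem zmod2_cases (a : ZMod 2) : a = 0 ∨ a = 1 := by revert a; decide

theorem eta_iff {w t : W} (ht : cs.IsReflection t) :
    cs.length (t * w) < cs.length w ↔ eta cs w t = 1 := by
  classical
  suffices H : ∀ n (w t : W), cs.IsReflection t → cs.length w = n →
      (cs.length (t * w) < cs.length w ↔ eta cs w t = 1) from H _ w t ht rfl
  intro n
  induction n using Nat.strong_induction_on with
  | _ n ih =>
    intro w t ht hn
    by_cases hw1 : w = 1
    · subst hw1
      have h0 : eta cs 1 t = 0 := eta_one cs t
      rw [mul_one, cs.length_one, h0]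
      constructor
      · omega
      · intro h; exact absurd h (by decide)
    · obtain ⟨i, hdesc⟩ := cs.exists_leftDescent_of_ne_one hw1
      have hdesc' : cs.length (cs.simple i * w) < cs.length w := hdesc
      set w' := cs.simple i * w with hw'def
      have hww : w = cs.simple i * w' := by
        rw [hw'def, cs.simple_mul_simple_cancel_left]
      have hlw' : cs.length w' + 1 = cs.length w := by
        have := cs.length_simple_mul w i
        rw [← hw'def] at this
        omega
      set t' := cs.simple i * t * cs.simple i with ht'def
      have hteq : eta cs w t = (if t = cs.simple i then 1 else 0) + eta cs w' t' := by
        calc eta cs w t = eta cs (cs.simple i * w') t := by rw [← hww]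
          _ = eta cs (cs.simple i) t + eta cs w' ((cs.simple i)⁻¹ * t * cs.simple i) := by
              rw [eta_mul]
          _ = (if t = cs.simple i then 1 else 0) + eta cs w' t' := by
              rw [eta_simple, cs.inv_simple, ht'def]
      by_cases hts : t = cs.simple i
      · have htw : t * w = w' := by rw [hts, hww, cs.simple_mul_simple_cancel_left]
        have ht's : t' = cs.simple i := by
          rw [ht'def, hts, cs.simple_mul_simple_self, one_mul]
        have hetaw' : eta cs w' (cs.simple i) = 0 := by
          have hiff := ih (cs.length w') (by omega) w' (cs.simple i)
            (cs.isReflection_simple i) rfl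
          have : ¬ cs.length (cs.simple i * w') < cs.length w' := by
            rw [← hww]; omega
          rcases zmod2_cases (eta cs w' (cs.simple i)) with h | h
          · exact h
          · exact absurd (hiff.mpr h) this
        have : eta cs w t = 1 := by
          rw [hteq, if_pos hts, ht's, hetaw']
          decide
        exact iff_of_true (by rw [htw]; omega) this
      · have hteq2 : eta cs w t = eta cs w' t' := by rw [hteq, if_neg hts, zero_add]
        have ht'refl : cs.IsReflection t' := by
          have := ht.conj (cs.simple i)
          rwa [cs.inv_simple, ← ht'def] at this
        have hiff := ih (cs.length w') (by omega) w' t' ht'refl rfl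
        have htw : t * w = cs.simple i * (t' * w') := by
          have hinner : t' * w' = cs.simple i * (t * w) := by
            rw [ht'def, hw'def]
            calc cs.simple i * t * cs.simple i * (cs.simple i * w)
                = cs.simple i * t * (cs.simple i * (cs.simple i * w)) := by group
              _ = cs.simple i * (t * w) := by rw [cs.simple_mul_simple_cancel_left]; group
          rw [hinner, cs.simple_mul_simple_cancel_left]
        rcases zmod2_cases (eta cs w' t') with h0 | h1
        · -- both sides false
          rw [hteq2, h0]
          constructor
          · intro hlt
            exfalso
            set u := t * w with hu
            have htu : t * u = w := by
              rw [hu, ← mul_assoc, ht.mul_self, one_mul]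
            have hiffu := ih (cs.length u) (by omega) u t ht rfl
            have hetau : eta cs u t = 0 := by
              have : ¬ cs.length (t * u) < cs.length u := by rw [htu]; omega
              rcases zmod2_cases (eta cs u t) with h | h
              · exact h
              · exact absurd (hiffu.mpr h) this
            have : eta cs w t = 1 := by
              calc eta cs w t = eta cs (t * u) t := by rw [htu]
                _ = eta cs t t + eta cs u (t⁻¹ * t * t) := by rw [eta_mul]
                _ = 1 + eta cs u t := by
                    rw [eta_self cs ht, inv_mul_cancel, one_mul]
                _ = 1 := by rw [hetau, add_zero]
            rw [hteq2, h0] at this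
            exact absurd this (by decide)
          · intro h; exact absurd h (by decide)
        · -- both sides true
          have hlt' : cs.length (t' * w') < cs.length w' := hiff.mpr h1
          have : cs.length (t * w) < cs.length w := by
            rw [htw]
            have h2 := cs.length_simple_mul (t' * w') i
            omega
          exact iff_of_true this (by rw [hteq2, h1])

open Classical in
theorem eta_count (ω : List B) (t : W) :
    eta cs (cs.wordProd ω) t = ((cs.leftInvSeq ω).count t : ZMod 2) := by
  induction ω generalizing t with
  | nil =>
      rw [cs.wordProd_nil, cs.leftInvSeq_nil, List.count_nil, eta_one, Nat.cast_zero]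
  | cons i ω ih =>
      rw [cs.wordProd_cons, eta_mul, eta_simple]
      have hlis : cs.leftInvSeq (i :: ω)
          = cs.simple i :: (cs.leftInvSeq ω).map (MulAut.conj (cs.simple i)) := rfl
      rw [hlis, List.count_cons]
      have hinj : Function.Injective (⇑(MulAut.conj (cs.simple i))) :=
        (MulAut.conj (cs.simple i)).injective
      have harg : (MulAut.conj (cs.simple i)) ((cs.simple i)⁻¹ * t * cs.simple i) = t := by
        rw [MulAut.conj_apply]
        group
      have hcnt : ((cs.leftInvSeq ω).map (MulAut.conj (cs.simple i))).count t
          = (cs.leftInvSeq ω).count ((cs.simple i)⁻¹ * t * cs.simple i) := by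
        conv_lhs => rw [← harg]
        exact List.count_map_of_injective _ _ hinj _
      rw [hcnt, ih]
      push_cast [apply_ite (Nat.cast : ℕ → ZMod 2)]
      rw [add_comm]
      congr 1
      refine if_congr ?_ rfl rfl
      rw [beq_iff_eq]
      exact ⟨fun h => h.symm, fun h => h.symm⟩

theorem mem_leftInvSeq_of_inversion {ω : List B} {t : W} (ht : cs.IsReflection t)
    (h : cs.length (t * cs.wordProd ω) < cs.length (cs.wordProd ω)) :
    t ∈ cs.leftInvSeq ω := by
  classical
  by_contra hmem
  have h0 : (cs.leftInvSeq ω).count t = 0 := List.count_eq_zero.mpr hmem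
  have h1 := (eta_iff cs ht).mp h
  rw [eta_count, h0, Nat.cast_zero] at h1
  exact absurd h1 (by decide)

theorem strong_exchange {ω : List B} {t : W} (ht : cs.IsReflection t)
    (h : cs.length (t * cs.wordProd ω) < cs.length (cs.wordProd ω)) :
    ∃ j, j < ω.length ∧ t * cs.wordProd ω = cs.wordProd (ω.eraseIdx j) := by
  have hmem := mem_leftInvSeq_of_inversion cs ht h
  obtain ⟨j, hj, hget⟩ := List.mem_iff_getElem.mp hmem
  refine ⟨j, by rw [← cs.length_leftInvSeq ω]; exact hj, ?_⟩
  calc t * cs.wordProd ω = ((cs.leftInvSeq ω).getD j 1) * cs.wordProd ω := by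
        rw [List.getD_eq_getElem _ 1 hj, hget]
    _ = cs.wordProd (ω.eraseIdx j) := cs.getD_leftInvSeq_mul_wordProd ω j

theorem strong_exchange_right {ω : List B} {i : B}
    (h : cs.length (cs.wordProd ω * cs.simple i) < cs.length (cs.wordProd ω)) :
    ∃ γ, γ <+ ω ∧ γ.length + 1 = ω.length ∧ cs.wordProd γ = cs.wordProd ω * cs.simple i := by
  have hinv : cs.simple i * (cs.wordProd ω)⁻¹ = (cs.wordProd ω * cs.simple i)⁻¹ := by
    rw [mul_inv_rev, cs.inv_simple]
  have h' : cs.length (cs.simple i * cs.wordProd ω.reverse)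
      < cs.length (cs.wordProd ω.reverse) := by
    rw [cs.wordProd_reverse, hinv, cs.length_inv, cs.length_inv]
    exact h
  obtain ⟨j, hj, heq⟩ := strong_exchange cs (cs.isReflection_simple i) h'
  rw [List.length_reverse] at hj
  refine ⟨(ω.reverse.eraseIdx j).reverse, ?_, ?_, ?_⟩
  · have hsub : ω.reverse.eraseIdx j <+ ω.reverse := List.eraseIdx_sublist _ _
    have h2 := hsub.reverse
    rwa [List.reverse_reverse] at h2
  · rw [List.length_reverse, List.length_eraseIdx_add_one (by rwa [List.length_reverse])]
    exact List.length_reverse (as := ω)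
  · rw [cs.wordProd_reverse, ← heq, cs.wordProd_reverse, hinv, inv_inv]

theorem exists_reduced_sublist (ω : List B) :
    ∃ β, β <+ ω ∧ cs.IsReduced β ∧ cs.wordProd β = cs.wordProd ω := by
  classical
  suffices H : ∀ n (ω : List B), ω.length = n →
      ∃ β, β <+ ω ∧ cs.IsReduced β ∧ cs.wordProd β = cs.wordProd ω from H _ ω rfl
  intro n
  induction n using Nat.strong_induction_on with
  | _ n ih =>
    intro ω hn
    by_cases hred : cs.IsReduced ω
    · exact ⟨ω, List.Sublist.refl ω, hred, rfl⟩
    · have hex : ∃ k, ¬ cs.IsReduced (ω.take k) := ⟨ω.length, by rwa [List.take_length]⟩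
      set k := Nat.find hex with hk
      have hknr : ¬ cs.IsReduced (ω.take k) := Nat.find_spec hex
      have hkmin : ∀ m, m < k → cs.IsReduced (ω.take m) := fun m hm =>
        not_not.mp (Nat.find_min hex hm)
      have hk0 : k ≠ 0 := by
        intro h0
        apply hknr
        rw [h0, List.take_zero]
        show cs.length (cs.wordProd []) = _
        rw [cs.wordProd_nil, cs.length_one]
        rfl
      have hkle : k ≤ ω.length := Nat.find_le (by rwa [List.take_length])
      set j := k - 1 with hjdef
      have hjk : j + 1 = k := by omega
      have hjlen : j < ω.length := by omega
      have hβred : cs.IsReduced (ω.take j) := hkmin j (by omega)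
      have htake : ω.take (j+1) = ω.take j ++ [ω[j]] := by
        rw [List.take_succ, List.getElem?_eq_getElem hjlen]
        rfl
      have hlen_tj : (ω.take j).length = j := by rw [List.length_take]; omega
      have hβl : cs.length (cs.wordProd (ω.take j)) = j := by
        rw [hβred, hlen_tj]
      have hprod1 : cs.wordProd (ω.take (j+1)) = cs.wordProd (ω.take j) * cs.simple ω[j] := by
        rw [htake, cs.wordProd_append, cs.wordProd_singleton]
      have hnr1 : cs.length (cs.wordProd (ω.take (j+1))) ≠ j + 1 := by
        intro hcon
        apply hknr
        rw [← hjk]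
        show cs.length (cs.wordProd (ω.take (j+1))) = (ω.take (j+1)).length
        rw [hcon, List.length_take]
        omega
      have hlt : cs.length (cs.wordProd (ω.take j) * cs.simple ω[j])
          < cs.length (cs.wordProd (ω.take j)) := by
        rcases cs.length_mul_simple (cs.wordProd (ω.take j)) ω[j] with hc | hc
        · exfalso; apply hnr1; rw [hprod1, hc, hβl]
        · omega
      obtain ⟨γ, hγsub, hγlen, hγprod⟩ := strong_exchange_right cs hlt
      set ω' := γ ++ ω.drop (j+1) with hω'
      have hω'prod : cs.wordProd ω' = cs.wordProd ω := by
        rw [hω', cs.wordProd_append, hγprod, ← hprod1, ← cs.wordProd_append,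
          List.take_append_drop]
      have hω'sub : ω' <+ ω := by
        have h1 : γ <+ ω.take (j+1) := by
          rw [htake]
          exact hγsub.trans (List.sublist_append_left _ _)
        have h2 : ω' <+ ω.take (j+1) ++ ω.drop (j+1) := List.Sublist.append h1 (List.Sublist.refl _)
        rwa [List.take_append_drop] at h2
      have hω'len : ω'.length < n := by
        rw [hω', List.length_append, List.length_drop]
        have hγl2 : γ.length + 1 = j := by rw [hγlen]; exact hlen_tj
        omega
      obtain ⟨β, hβsub, hβr, hβp⟩ := ih ω'.length hω'len ω' rfl
      exact ⟨β, hβsub.trans hω'sub, hβr, by rw [hβp, hω'prod]⟩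

/-- One step of the Bruhat order: multiply by a reflection, increasing length. -/
def BStep (u u' : W) : Prop :=
  ∃ t, cs.IsReflection t ∧ u' = t * u ∧ cs.length u < cs.length u'

/-- The Bruhat order, as chains of reflection steps. -/
def BLE (u u' : W) : Prop := Relation.ReflTransGen (BStep cs) u u'

theorem BLE.refl (u : W) : BLE cs u u := Relation.ReflTransGen.refl

theorem BLE_length {u w : W} (h : BLE cs u w) : cs.length u ≤ cs.length w := by
  induction h with
  | refl => exact le_rfl
  | tail _ hstep ih =>
      obtain ⟨t, _, _, hlen⟩ := hstep
      omega

/-- Chains give subwords of every reduced word. -/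
theorem BLE_subword {v w : W} (h : BLE cs v w) :
    ∀ l : List B, cs.IsReduced l → cs.wordProd l = w →
      ∃ l2, l2 <+ l ∧ cs.IsReduced l2 ∧ cs.wordProd l2 = v := by
  suffices H : ∀ n (w : W), cs.length w = n → BLE cs v w →
      ∀ l : List B, cs.IsReduced l → cs.wordProd l = w →
        ∃ l2, l2 <+ l ∧ cs.IsReduced l2 ∧ cs.wordProd l2 = v from
    fun l hl hlw => H _ w rfl h l hl hlw
  clear h
  intro n
  induction n using Nat.strong_induction_on with
  | _ n ih =>
    intro w hn h l hl hlw
    rcases Relation.ReflTransGen.cases_tail h with heq | ⟨u, hvu, hstep⟩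
    · exact ⟨l, List.Sublist.refl l, hl, by rw [hlw, heq]⟩
    · obtain ⟨t, htrefl, hw, hlen⟩ := hstep
      have htw : cs.length (t * cs.wordProd l) < cs.length (cs.wordProd l) := by
        rw [hlw, hw, ← mul_assoc, htrefl.mul_self, one_mul, ← hw]
        exact hlen
      obtain ⟨j, hj, heq⟩ := strong_exchange cs htrefl htw
      have hu : cs.wordProd (l.eraseIdx j) = u := by
        rw [← heq, hlw, hw, ← mul_assoc, htrefl.mul_self, one_mul]
      obtain ⟨β, hβsub, hβred, hβprod⟩ := exists_reduced_sublist cs (l.eraseIdx j)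
      have hβu : cs.wordProd β = u := by rw [hβprod, hu]
      have hlu : cs.length u < n := by
        rw [← hn]
        exact hlen
      obtain ⟨l2, hl2sub, hl2red, hl2prod⟩ := ih (cs.length u) hlu u rfl hvu β hβred hβu
      exact ⟨l2, hl2sub.trans (hβsub.trans (List.eraseIdx_sublist l j)), hl2red, hl2prod⟩

/-- Key step lemma for the lifting property. -/
theorem BLE_step_aux (i : B) {t u u₁ : W} (ht : cs.IsReflection t) (hu : u = t * u₁)
    (h1 : cs.length u₁ < cs.length u) (h2 : cs.length (cs.simple i * u) < cs.length u) :
    BLE cs (cs.simple i * u₁) u := by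
  obtain ⟨α, hαred, hα⟩ := cs.exists_reduced_word' (cs.simple i * u)
  have hword : cs.wordProd (i :: α) = u := by
    rw [cs.wordProd_cons, ← hα, cs.simple_mul_simple_cancel_left]
  have hlsu : cs.length (cs.simple i * u) + 1 = cs.length u := by
    have := cs.length_simple_mul u i
    omega
  have hred : cs.IsReduced (i :: α) := by
    show cs.length (cs.wordProd (i :: α)) = _
    rw [hword, List.length_cons, ← hαred, ← hα]
    omega
  have hu₁ : u₁ = t * u := by
    rw [hu, ← mul_assoc, ht.mul_self, one_mul]
  have htinv : cs.length (t * cs.wordProd (i :: α)) < cs.length (cs.wordProd (i :: α)) := by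
    rw [hword, ← hu₁]
    omega
  have hmem : t ∈ cs.leftInvSeq (i :: α) := mem_leftInvSeq_of_inversion cs ht htinv
  have hlis : cs.leftInvSeq (i :: α)
      = cs.simple i :: (cs.leftInvSeq α).map (MulAut.conj (cs.simple i)) := rfl
  rw [hlis, List.mem_cons] at hmem
  rcases hmem with heq | hmem
  · -- t = s i, so s i * u₁ = u
    have : cs.simple i * u₁ = u := by
      rw [hu₁, heq, ← mul_assoc, cs.simple_mul_simple_self, one_mul]
    rw [this]
    exact BLE.refl cs u
  · obtain ⟨t₀, ht₀mem, ht₀⟩ := List.mem_map.mp hmem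
    have ht₀refl : cs.IsReflection t₀ := cs.isReflection_of_mem_leftInvSeq α ht₀mem
    have ht₀inv : cs.length (t₀ * cs.wordProd α) < cs.length (cs.wordProd α) :=
      (cs.isLeftInversion_of_mem_leftInvSeq hαred ht₀mem).2
    rw [← hα] at ht₀inv
    have ht₀eq : t = cs.simple i * t₀ * (cs.simple i)⁻¹ := ht₀.symm
    have hkey : cs.simple i * u₁ = t₀ * (cs.simple i * u) := by
      rw [hu₁, ht₀eq, cs.inv_simple]
      calc cs.simple i * (cs.simple i * t₀ * cs.simple i * u)
          = cs.simple i * (cs.simple i * (t₀ * (cs.simple i * u))) := by group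
        _ = t₀ * (cs.simple i * u) := by rw [cs.simple_mul_simple_cancel_left]
    have hchain1 : BStep cs (cs.simple i * u₁) (cs.simple i * u) := by
      refine ⟨t₀, ht₀refl, ?_, ?_⟩
      · rw [hkey, ← mul_assoc, ht₀refl.mul_self, one_mul]
      · rw [hkey]; omega
    have hchain2 : BStep cs (cs.simple i * u) u := by
      refine ⟨cs.simple i, cs.isReflection_simple i, ?_, by omega⟩
      rw [← mul_assoc, cs.simple_mul_simple_self, one_mul]
    exact Relation.ReflTransGen.head hchain1 (Relation.ReflTransGen.single hchain2)

/-- The lifting property of the Bruhat order, in both forms. -/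
theorem BLE_lift {x u : W} (h : BLE cs x u) (i : B) :
    (cs.length (cs.simple i * u) < cs.length u → cs.length x < cs.length (cs.simple i * x) →
      BLE cs (cs.simple i * x) u) ∧
    (cs.length u < cs.length (cs.simple i * u) → cs.length x < cs.length (cs.simple i * x) →
      BLE cs (cs.simple i * x) (cs.simple i * u)) := by
  induction h with
  | refl =>
      constructor
      · intro h1 h2; omega
      · intro _ _; exact BLE.refl _ _
  | @tail u₁ u' hchain hstep ih =>
      obtain ⟨t, htrefl, hw, hlen⟩ := hstep
      constructor
      · intro h1 h2
        rcases cs.length_simple_mul u₁ i with hc | hc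
        · -- ascent at u₁
          have hx : BLE cs (cs.simple i * x) (cs.simple i * u₁) := ih.2 (by omega) h2
          have haux : BLE cs (cs.simple i * u₁) u' := BLE_step_aux cs i htrefl hw hlen h1
          exact hx.trans haux
        · -- descent at u₁
          have hx : BLE cs (cs.simple i * x) u₁ := ih.1 (by omega) h2
          exact Relation.ReflTransGen.tail hx ⟨t, htrefl, hw, hlen⟩
      · intro h1 h2
        rcases cs.length_simple_mul u₁ i with hc | hc
        · have hx : BLE cs (cs.simple i * x) (cs.simple i * u₁) := ih.2 (by omega) h2
          refine Relation.ReflTransGen.tail hx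
            ⟨cs.simple i * t * (cs.simple i)⁻¹, htrefl.conj _, ?_, ?_⟩
          · rw [cs.inv_simple, hw]
            calc cs.simple i * (t * u₁)
                = cs.simple i * (t * (cs.simple i * (cs.simple i * u₁))) := by
                  rw [cs.simple_mul_simple_cancel_left]
              _ = cs.simple i * t * cs.simple i * (cs.simple i * u₁) := by group
          · have hu' := cs.length_simple_mul u' i
            omega
        · have hx : BLE cs (cs.simple i * x) u₁ := ih.1 (by omega) h2
          have c1 : BStep cs u₁ u' := ⟨t, htrefl, hw, hlen⟩
          have c2 : BStep cs u' (cs.simple i * u') :=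
            ⟨cs.simple i, cs.isReflection_simple i, rfl, h1⟩
          exact Relation.ReflTransGen.tail (Relation.ReflTransGen.tail hx c1) c2

/-- Reduced subwords are Bruhat-below. -/
theorem subword_BLE : ∀ (ω : List B), cs.IsReduced ω → ∀ l2, l2 <+ ω → cs.IsReduced l2 →
    BLE cs (cs.wordProd l2) (cs.wordProd ω) := by
  intro ω
  induction ω with
  | nil =>
      intro _ l2 hsub _
      rw [List.sublist_nil.mp hsub]
      exact BLE.refl _ _
  | cons j ω' ihω =>
      intro hred l2 hsub hl2red
      have hω'red : cs.IsReduced ω' := by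
        have h := hred.drop 1
        simpa using h
      have hlcons : cs.length (cs.wordProd (j :: ω')) = ω'.length + 1 := by
        rw [show cs.length (cs.wordProd (j :: ω')) = (j :: ω').length from hred,
          List.length_cons]
      have hlω' : cs.length (cs.wordProd ω') = ω'.length :=  hω'red
      have hstep : BStep cs (cs.wordProd ω') (cs.wordProd (j :: ω')) :=
        ⟨cs.simple j, cs.isReflection_simple j, cs.wordProd_cons j ω', by omega⟩
      cases hsub with
      | cons _ hsub' =>
          exact Relation.ReflTransGen.tail (ihω hω'red _ hsub' hl2red) hstep
      | cons_cons _ hsub' =>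
          rename_i l2t
          have hl2tred : cs.IsReduced l2t := by
            have h := hl2red.drop 1
            simpa using h
          have hble := ihω hω'red l2t hsub' hl2tred
          have h1 : cs.length (cs.wordProd ω') < cs.length (cs.simple j * cs.wordProd ω') := by
            rw [← cs.wordProd_cons]
            omega
          have h2 : cs.length (cs.wordProd l2t)
              < cs.length (cs.simple j * cs.wordProd l2t) := by
            rw [← cs.wordProd_cons]
            have e1 : cs.length (cs.wordProd (j :: l2t)) = l2t.length + 1 := by
              rw [show cs.length (cs.wordProd (j :: l2t)) = (j :: l2t).length from hl2red,
                List.length_cons]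
            have e2 : cs.length (cs.wordProd l2t) = l2t.length := hl2tred
            omega
          have hres := (BLE_lift cs hble j).2 h1 h2
          rw [← cs.wordProd_cons, ← cs.wordProd_cons] at hres
          exact hres

theorem eraseIdx_append_left {α : Type*} {l1 l2 : List α} {j : ℕ} (h : j < l1.length) :
    (l1 ++ l2).eraseIdx j = l1.eraseIdx j ++ l2 := by
  rw [List.eraseIdx_eq_take_drop_succ, List.eraseIdx_eq_take_drop_succ,
    List.take_append, List.drop_append,
    Nat.sub_eq_zero_of_le h.le, Nat.sub_eq_zero_of_le (by omega), List.take_zero,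
    List.drop_zero, List.append_nil, List.append_assoc]

theorem eraseIdx_append_right {α : Type*} {l1 l2 : List α} {j : ℕ} (h : l1.length ≤ j) :
    (l1 ++ l2).eraseIdx j = l1 ++ l2.eraseIdx (j - l1.length) := by
  rw [List.eraseIdx_eq_take_drop_succ, List.eraseIdx_eq_take_drop_succ,
    List.take_append, List.drop_append,
    List.take_of_length_le h, List.drop_of_length_le (by omega),
    show j + 1 - l1.length = j - l1.length + 1 by omega, List.nil_append,
    List.append_assoc]

variable (J : Set B)

theorem wordProd_mem_closure {ω : List B} (h : ∀ i ∈ ω, i ∈ J) :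
    cs.wordProd ω ∈ Subgroup.closure (cs.simple '' J) := by
  induction ω with
  | nil => rw [cs.wordProd_nil]; exact Subgroup.one_mem _
  | cons i ω ih =>
      rw [cs.wordProd_cons]
      exact Subgroup.mul_mem _
        (Subgroup.subset_closure (Set.mem_image_of_mem _ (h i (List.mem_cons_self (a := i)))))
        (ih (fun i' hi' => h i' (List.mem_cons_of_mem _ hi')))

theorem simple_mem_closure {i : B} (hi : i ∈ J) :
    cs.simple i ∈ Subgroup.closure (cs.simple '' J) :=
  Subgroup.subset_closure (Set.mem_image_of_mem _ hi)

theorem exists_J_word {q : W} (hq : q ∈ Subgroup.closure (cs.simple '' J)) :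
    ∃ ω, (∀ i ∈ ω, i ∈ J) ∧ cs.IsReduced ω ∧ cs.wordProd ω = q := by
  have hword : ∃ ω, (∀ i ∈ ω, i ∈ J) ∧ cs.wordProd ω = q := by
    refine Subgroup.closure_induction ?_ ?_ ?_ ?_ hq
    · rintro x ⟨i, hi, rfl⟩
      exact ⟨[i], by simpa using hi, cs.wordProd_singleton i⟩
    · exact ⟨[], by simp, cs.wordProd_nil⟩
    · rintro x y _ _ ⟨ω₁, h₁, rfl⟩ ⟨ω₂, h₂, rfl⟩
      exact ⟨ω₁ ++ ω₂, by
        intro i hi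
        rcases List.mem_append.mp hi with h | h
        exacts [h₁ i h, h₂ i h], cs.wordProd_append ω₁ ω₂⟩
    · rintro x _ ⟨ω, h₁, rfl⟩
      exact ⟨ω.reverse, fun i hi => h₁ i (List.mem_reverse.mp hi), cs.wordProd_reverse ω⟩
  obtain ⟨ω, hJ, hprod⟩ := hword
  obtain ⟨β, hsub, hred, hβ⟩ := exists_reduced_sublist cs ω
  exact ⟨β, fun i hi => hJ i (hsub.subset hi), hred, by rw [hβ, hprod]⟩

theorem leftInvSeq_mem_closure {ω : List B} (h : ∀ i ∈ ω, i ∈ J) :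
    ∀ t ∈ cs.leftInvSeq ω, t ∈ Subgroup.closure (cs.simple '' J) := by
  induction ω with
  | nil => intro t ht; simp [cs.leftInvSeq_nil] at ht
  | cons i ω ih =>
      intro t ht
      have hlis : cs.leftInvSeq (i :: ω)
          = cs.simple i :: (cs.leftInvSeq ω).map (MulAut.conj (cs.simple i)) := rfl
      rw [hlis, List.mem_cons] at ht
      have hsi : cs.simple i ∈ Subgroup.closure (cs.simple '' J) :=
        simple_mem_closure cs J (h i (List.mem_cons_self (a := i)))
      rcases ht with rfl | ht
      · exact hsi
      · obtain ⟨t₀, ht₀, rfl⟩ := List.mem_map.mp ht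
        have ht₀K := ih (fun i' hi' => h i' (List.mem_cons_of_mem _ hi')) t₀ ht₀
        show cs.simple i * t₀ * (cs.simple i)⁻¹ ∈ _
        exact Subgroup.mul_mem _ (Subgroup.mul_mem _ hsi ht₀K) (Subgroup.inv_mem _ hsi)

theorem min_rep_add {v' : W}
    (hmin : ∀ p ∈ Subgroup.closure (cs.simple '' J), cs.length v' ≤ cs.length (p * v')) :
    ∀ q ∈ Subgroup.closure (cs.simple '' J),
      cs.length (q * v') = cs.length q + cs.length v' := by
  suffices H : ∀ n, ∀ q ∈ Subgroup.closure (cs.simple '' J), cs.length q = n →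
      cs.length (q * v') = cs.length q + cs.length v' from fun q hq => H _ q hq rfl
  intro n
  induction n using Nat.strong_induction_on with
  | _ n ih =>
    intro q hq hn
    rcases Nat.eq_zero_or_pos n with h0 | hpos
    · have : q = 1 := cs.length_eq_zero_iff.mp (by omega)
      rw [this, one_mul, cs.length_one, zero_add]
    · obtain ⟨ω, hJw, hred, hprod⟩ := exists_J_word cs J hq
      have hlen : ω.length = n := by
        rw [← hn, ← hprod, hred]
      cases ω with
      | nil => simp at hlen; omega
      | cons i ρ =>
        have hiJ : i ∈ J := hJw i (List.mem_cons_self (a := i))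
        have hρJ : ∀ i' ∈ ρ, i' ∈ J := fun i' hi' => hJw i' (List.mem_cons_of_mem _ hi')
        have hρred : cs.IsReduced ρ := by
          have h := hred.drop 1
          simpa using h
        set qt := cs.wordProd ρ with hqt
        have hqtK : qt ∈ Subgroup.closure (cs.simple '' J) := wordProd_mem_closure cs J hρJ
        have hqtlen : cs.length qt = ρ.length := hρred
        have hq_eq : q = cs.simple i * qt := by rw [← hprod, cs.wordProd_cons]
        have hih : cs.length (qt * v') = cs.length qt + cs.length v' :=
          ih ρ.length (by simp at hlen; omega) qt hqtK hqtlen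
        obtain ⟨ωv, hωvred, hωv⟩ := cs.exists_reduced_word' v'
        have hbigprod : cs.wordProd (ρ ++ ωv) = qt * v' := by
          rw [cs.wordProd_append, ← hqt, ← hωv]
        have hbigred : cs.IsReduced (ρ ++ ωv) := by
          show cs.length _ = _
          rw [hbigprod, List.length_append, hih, hqtlen, hωv, hωvred]
        rcases cs.length_simple_mul (qt * v') i with hc | hc
        · rw [hq_eq, mul_assoc, hc, hih]
          have : cs.length (cs.simple i * qt) = cs.length qt + 1 := by
            rw [hqt, ← cs.wordProd_cons]
            calc cs.length (cs.wordProd (i :: ρ)) = (i :: ρ).length := hred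
              _ = ρ.length + 1 := rfl
              _ = cs.length (cs.wordProd ρ) + 1 := by rw [hρred]
          omega
        · exfalso
          have hlt : cs.length (cs.simple i * cs.wordProd (ρ ++ ωv))
              < cs.length (cs.wordProd (ρ ++ ωv)) := by
            rw [hbigprod]
            omega
          obtain ⟨j, hj, heq⟩ := strong_exchange cs (cs.isReflection_simple i) hlt
          rw [hbigprod] at heq
          rw [List.length_append] at hj
          by_cases hjρ : j < ρ.length
          · rw [eraseIdx_append_left hjρ, cs.wordProd_append] at heq
            have hqeq2 : q = cs.wordProd (ρ.eraseIdx j) := by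
              have : q * v' = cs.wordProd (ρ.eraseIdx j) * v' := by
                rw [hq_eq, mul_assoc, heq, ← hωv]
              exact mul_right_cancel this
            have hle := cs.length_wordProd_le (ρ.eraseIdx j)
            rw [← hqeq2] at hle
            have hlE : (ρ.eraseIdx j).length + 1 = ρ.length := List.length_eraseIdx_add_one hjρ
            have hlen' : ρ.length + 1 = n := by simpa using hlen
            omega
          · rw [eraseIdx_append_right (by omega), cs.wordProd_append] at heq
            set z := cs.wordProd (ωv.eraseIdx (j - ρ.length)) with hz
            have hzeq : z = (qt⁻¹ * cs.simple i * qt) * v' := by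
              calc z = qt⁻¹ * (qt * z) := by group
                _ = qt⁻¹ * (cs.simple i * (qt * v')) := by rw [heq, ← hqt]
                _ = (qt⁻¹ * cs.simple i * qt) * v' := by group
            have hp₀K : qt⁻¹ * cs.simple i * qt ∈ Subgroup.closure (cs.simple '' J) :=
              Subgroup.mul_mem _ (Subgroup.mul_mem _ (Subgroup.inv_mem _ hqtK)
                (simple_mem_closure cs J hiJ)) hqtK
            have hge := hmin _ hp₀K
            rw [← hzeq] at hge
            have hle := cs.length_wordProd_le (ωv.eraseIdx (j - ρ.length))
            rw [← hz] at hle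
            have hjv : j - ρ.length < ωv.length := by omega
            have hlenv : (ωv.eraseIdx (j - ρ.length)).length + 1 = ωv.length :=
              List.length_eraseIdx_add_one hjv
            have hωvlen : ωv.length = cs.length v' := by rw [← hωvred, ← hωv]
            omega

theorem length_w0_mul {w₀ : W} (hw₀mem : w₀ ∈ Subgroup.closure (cs.simple '' J))
    (hw₀max : ∀ u ∈ Subgroup.closure (cs.simple '' J), cs.length u ≤ cs.length w₀)
    (x : W) (hx : x ∈ Subgroup.closure (cs.simple '' J)) :
    cs.length (w₀ * x) + cs.length x = cs.length w₀ := by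
  classical
  obtain ⟨ω₀, hω₀J, hω₀red, hω₀prod⟩ := exists_J_word cs J hw₀mem
  set R : Finset W := (cs.leftInvSeq ω₀).toFinset with hR
  have hRcard : R.card = cs.length w₀ := by
    rw [hR, List.toFinset_card_of_nodup hω₀red.nodup_leftInvSeq, cs.length_leftInvSeq,
      ← hω₀prod]
    exact hω₀red.symm ▸ rfl
  have hRmem : ∀ t, t ∈ R ↔ (cs.IsReflection t ∧ t ∈ Subgroup.closure (cs.simple '' J)) := by
    intro t
    constructor
    · intro ht
      rw [hR, List.mem_toFinset] at ht
      exact ⟨cs.isReflection_of_mem_leftInvSeq ω₀ ht, leftInvSeq_mem_closure cs J hω₀J t ht⟩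
    · rintro ⟨htrefl, htK⟩
      rw [hR, List.mem_toFinset]
      apply mem_leftInvSeq_of_inversion cs htrefl
      rw [hω₀prod]
      have h1 : t * w₀ ∈ Subgroup.closure (cs.simple '' J) := mul_mem htK hw₀mem
      have h2 := hw₀max _ h1
      have h3 := htrefl.length_mul_right_ne w₀
      omega
  have hcard : ∀ y ∈ Subgroup.closure (cs.simple '' J),
      (R.filter (fun t => eta cs y t = 1)).card = cs.length y := by
    intro y hy
    obtain ⟨ωy, hωyJ, hωyred, hωyprod⟩ := exists_J_word cs J hy
    have hfe : R.filter (fun t => eta cs y t = 1) = (cs.leftInvSeq ωy).toFinset := by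
      apply Finset.ext
      intro t
      rw [Finset.mem_filter]
      constructor
      · rintro ⟨htR, hteta⟩
        obtain ⟨htrefl, _⟩ := (hRmem t).mp htR
        apply List.mem_toFinset.mpr
        apply mem_leftInvSeq_of_inversion cs htrefl
        rw [hωyprod]
        exact (eta_iff cs htrefl).mpr hteta
      · intro hmem'
        have hmem : t ∈ cs.leftInvSeq ωy := List.mem_toFinset.mp hmem'
        have htrefl := cs.isReflection_of_mem_leftInvSeq ωy hmem
        refine ⟨(hRmem t).mpr ⟨htrefl, leftInvSeq_mem_closure cs J hωyJ t hmem⟩, ?_⟩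
        have hinv := (cs.isLeftInversion_of_mem_leftInvSeq hωyred hmem).2
        rw [hωyprod] at hinv
        exact (eta_iff cs htrefl).mp hinv
    rw [hfe, List.toFinset_card_of_nodup hωyred.nodup_leftInvSeq, cs.length_leftInvSeq,
      ← hωyprod]
    exact hωyred.symm ▸ rfl
  have hw₀x : w₀ * x ∈ Subgroup.closure (cs.simple '' J) := mul_mem hw₀mem hx
  have h1 := hcard (w₀ * x) hw₀x
  have hetaw₀ : ∀ t ∈ R, eta cs w₀ t = 1 := by
    intro t htR
    obtain ⟨htrefl, htK⟩ := (hRmem t).mp htR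
    apply (eta_iff cs htrefl).mp
    have h2 := hw₀max _ (mul_mem htK hw₀mem)
    have h3 := htrefl.length_mul_right_ne w₀
    omega
  have hfeq : R.filter (fun t => eta cs (w₀ * x) t = 1)
      = R.filter (fun t => eta cs x (w₀⁻¹ * t * w₀) = 0) := by
    apply Finset.filter_congr
    intro t ht
    rw [eta_mul, hetaw₀ t ht]
    have hz2 : ∀ a : ZMod 2, (1 + a = 1) ↔ (a = 0) := by decide
    exact hz2 _
  have hbij : (R.filter (fun t => eta cs x (w₀⁻¹ * t * w₀) = 0)).card
      = (R.filter (fun t' => eta cs x t' = 0)).card := by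
    apply Finset.card_bij' (fun t _ => w₀⁻¹ * t * w₀) (fun t' _ => w₀ * t' * w₀⁻¹)
    · intro t ht
      rw [Finset.mem_filter] at ht ⊢
      obtain ⟨htR, hcond⟩ := ht
      obtain ⟨htrefl, htK⟩ := (hRmem t).mp htR
      refine ⟨(hRmem _).mpr ⟨?_, ?_⟩, hcond⟩
      · have := htrefl.conj w₀⁻¹
        simpa using this
      · exact mul_mem (mul_mem (inv_mem hw₀mem) htK) hw₀mem
    · intro t ht
      rw [Finset.mem_filter] at ht ⊢
      obtain ⟨htR, hcond⟩ := ht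
      obtain ⟨htrefl, htK⟩ := (hRmem t).mp htR
      refine ⟨(hRmem _).mpr ⟨htrefl.conj w₀, mul_mem (mul_mem hw₀mem htK) (inv_mem hw₀mem)⟩, ?_⟩
      have harg : w₀⁻¹ * (w₀ * t * w₀⁻¹) * w₀ = t := by group
      rw [harg]
      exact hcond
    · intro t _; group
    · intro t _; group
  have hsplit : (R.filter (fun t => eta cs x t = 1)).card
      + (R.filter (fun t => ¬ (eta cs x t = 1))).card = R.card :=
    Finset.card_filter_add_card_filter_not _
  have hne : R.filter (fun t => ¬ (eta cs x t = 1)) = R.filter (fun t => eta cs x t = 0) := by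
    apply Finset.filter_congr
    intro t _
    have hz2 : ∀ a : ZMod 2, (¬ (a = 1)) ↔ (a = 0) := by decide
    exact hz2 _
  have hx1 := hcard x hx
  rw [hfeq, hbij] at h1
  rw [hne] at hsplit
  omega

theorem all_descent_eq_w0 {w₀ : W} (hw₀mem : w₀ ∈ Subgroup.closure (cs.simple '' J))
    (hw₀max : ∀ u ∈ Subgroup.closure (cs.simple '' J), cs.length u ≤ cs.length w₀)
    {q : W} (hq : q ∈ Subgroup.closure (cs.simple '' J))
    (hdesc : ∀ i ∈ J, cs.length (cs.simple i * q) < cs.length q) : q = w₀ := by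
  set z := w₀ * q⁻¹ with hz
  have hzK : z ∈ Subgroup.closure (cs.simple '' J) := mul_mem hw₀mem (inv_mem hq)
  have hzlen : cs.length z + cs.length q = cs.length w₀ := by
    have := length_w0_mul cs J hw₀mem hw₀max q⁻¹ (inv_mem hq)
    rwa [cs.length_inv] at this
  have hzq : z * q = w₀ := by rw [hz]; group
  by_cases hz1 : z = 1
  · rw [hz1, one_mul] at hzq
    exact hzq
  · exfalso
    obtain ⟨ωz, hωzJ, hωzred, hωzprod⟩ := exists_J_word cs J hzK
    rcases List.eq_nil_or_concat ωz with hnil | ⟨ρ, a, hcons0⟩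
    · apply hz1
      rw [← hωzprod, hnil, cs.wordProd_nil]
    · have hcons : ωz = ρ ++ [a] := by rw [hcons0, List.concat_eq_append]
      have haJ : a ∈ J := hωzJ a (by rw [hcons]; exact List.mem_append_right _ (List.mem_singleton_self a))
      have hρred : cs.IsReduced ρ := by
        have h := hωzred.take ρ.length
        rwa [hcons, List.take_left] at h
      have hρlen : cs.length (cs.wordProd ρ) = ρ.length := hρred
      have hzsplit : z = cs.wordProd ρ * cs.simple a := by
        rw [← hωzprod, hcons, cs.wordProd_append, cs.wordProd_singleton]
      have hωzlen : ρ.length + 1 = cs.length z := by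
        rw [← hωzprod]
        rw [show cs.length (cs.wordProd ωz) = ωz.length from hωzred, hcons]
        simp
      have hw₀split : w₀ = cs.wordProd ρ * (cs.simple a * q) := by
        rw [← hzq, hzsplit]
        group
      have hub := cs.length_mul_le (cs.wordProd ρ) (cs.simple a * q)
      rw [← hw₀split, hρlen] at hub
      have hdq := hdesc a haJ
      omega

end BruhatAux


/-- The Bruhat order on a Coxeter group, via the subword property: `v ≤ w` iff every reduced
word for `w` has a sublist which is a reduced word for `v`. -/
def CoxeterSystem.bruhatLE {B W : Type*} [Group W] {M : CoxeterMatrix B}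
    (cs : CoxeterSystem M W) (v w : W) : Prop :=
  ∀ l : List B, cs.IsReduced l → cs.wordProd l = w →
    ∃ l2 : List B, l2.Sublist l ∧ cs.IsReduced l2 ∧ cs.wordProd l2 = v

/-- Let `w₀` be the longest element of a finite standard parabolic subgroup `W_J`, and let
`w = w₀·y ∈ W⁺` (with `y` minimal in its coset and lengths additive). If `v ≤ w` in the
Bruhat order and `v'` is the minimal coset representative of `W_J·v`, then `w₀·v' ≤ w`. -/
theorem maximal_coset_rep_le {B W : Type*} [Group W] {M : CoxeterMatrix B}
    (cs : CoxeterSystem M W) (J : Set B)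
    (hfin : ((Subgroup.closure (cs.simple '' J) : Subgroup W) : Set W).Finite)
    (w₀ y w v v' : W)
    (hw₀mem : w₀ ∈ Subgroup.closure (cs.simple '' J))
    (hw₀max : ∀ u ∈ Subgroup.closure (cs.simple '' J), cs.length u ≤ cs.length w₀)
    (hymin : ∀ p ∈ Subgroup.closure (cs.simple '' J), cs.length y ≤ cs.length (p * y))
    (hw : w = w₀ * y) (hadd : cs.length w = cs.length w₀ + cs.length y)
    (hv : cs.bruhatLE v w)
    (hv' : ∃ p ∈ Subgroup.closure (cs.simple '' J), v = p * v')
    (hv'min : ∀ q ∈ Subgroup.closure (cs.simple '' J), cs.length v' ≤ cs.length (q * v')) :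
    cs.bruhatLE (w₀ * v') w := by
  classical
  open BruhatAux in
  obtain ⟨p, hpK, hvpv⟩ := hv'
  have hJdesc : ∀ i ∈ J, cs.length (cs.simple i * w) < cs.length w := by
    intro i hi
    have h1 : cs.simple i * w₀ ∈ Subgroup.closure (cs.simple '' J) :=
      mul_mem (simple_mem_closure cs J hi) hw₀mem
    have h2 := hw₀max _ h1
    have h3 := cs.length_simple_mul_ne w₀ i
    have h4 := cs.length_mul_le (cs.simple i * w₀) y
    calc cs.length (cs.simple i * w) = cs.length (cs.simple i * w₀ * y) := by
          rw [hw, mul_assoc]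
      _ ≤ cs.length (cs.simple i * w₀) + cs.length y := h4
      _ < cs.length w := by omega
  have hvw : BLE cs v w := by
    obtain ⟨ρ, hρred, hρprod⟩ := cs.exists_reduced_word' w
    obtain ⟨l2, hsub, hl2red, hl2prod⟩ := hv ρ hρred hρprod.symm
    have hb := subword_BLE cs ρ hρred l2 hsub hl2red
    rwa [hl2prod, ← hρprod] at hb
  have climb : ∀ n (u p : W), p ∈ Subgroup.closure (cs.simple '' J) → u = p * v' →
      BLE cs u w → cs.length w ≤ n + cs.length u → BLE cs (w₀ * v') w := by
    intro n
    induction n using Nat.strong_induction_on with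
    | _ n ihn =>
      intro u p hpK hu hble hbound
      by_cases hall : ∀ i ∈ J, cs.length (cs.simple i * u) < cs.length u
      · have hpdesc : ∀ i ∈ J, cs.length (cs.simple i * p) < cs.length p := by
          intro i hi
          have h1 := min_rep_add cs J hv'min p hpK
          have h2 := min_rep_add cs J hv'min (cs.simple i * p)
            (mul_mem (simple_mem_closure cs J hi) hpK)
          have h3 := hall i hi
          rw [hu, ← mul_assoc] at h3
          omega
        have hp : p = w₀ := all_descent_eq_w0 cs J hw₀mem hw₀max hpK hpdesc
        rw [hu, hp] at hble
        exact hble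
      · push_neg at hall
        obtain ⟨i, hiJ, hnd⟩ := hall
        have hne := cs.length_simple_mul_ne u i
        have hgt : cs.length u < cs.length (cs.simple i * u) := by omega
        have hstep := (BLE_lift cs hble i).1 (hJdesc i hiJ) hgt
        have hlen2 := BLE_length cs hstep
        have hn1 : n ≠ 0 := by
          intro h0
          rw [h0] at hbound
          omega
        exact ihn (n - 1) (by omega) (cs.simple i * u) (cs.simple i * p)
          (mul_mem (simple_mem_closure cs J hiJ) hpK) (by rw [hu, mul_assoc]) hstep (by omega)
  have hfinal : BLE cs (w₀ * v') w := climb (cs.length w) v p hpK hvpv hvw (by omega)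
  intro l hlred hlprod
  exact BLE_subword cs hfinal l hlred hlprod
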